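/- arXiv:1502.04876 — 2 statements merged into one kernel-verified Lean document; each statement's English description precedes it below -/
import Mathlib

section
/- Let F : ℝ² → SU(2) be a smooth map and write F⁻¹∂_x F = U_𝔨 + U_𝔭 and F⁻¹∂_y F = V_𝔨 + V_𝔭, where U_𝔨, V_𝔨 take values in 𝔨 = span{e₃} and U_𝔭, V_𝔭 take values in 𝔭 = span{e₁, e₂}. Define N := F e₃ F⁻¹. Then at each point p, the bracket [N, ∂_x ∂_y N] vanishes at p (i.e. ∂_x∂_y N is proportional to N at p) if and only if ∂_x V_𝔭 + [U_𝔨, V_𝔭] = 0 at p. In particular, N is Lorentz harmonic (N × N_xy ≡ 0, with cross product corresponding to the bracket) if and only if ∂_x V_𝔭 + [U_𝔨, V_𝔭] ≡ 0. -/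
open Matrix

attribute [local instance] Matrix.normedAddCommGroup Matrix.normedSpace

noncomputable section

/-- The space of 2×2 complex matrices. -/
abbrev M2 : Type := Matrix (Fin 2) (Fin 2) ℂ

/-- Basis vector `e₁` of `su(2)`. -/
def e1 : M2 := (1 / 2 : ℂ) • !![0, Complex.I; Complex.I, 0]

/-- Basis vector `e₂` of `su(2)`. -/
def e2 : M2 := (1 / 2 : ℂ) • !![0, -1; 1, 0]

/-- Basis vector `e₃` of `su(2)`. -/
def e3 : M2 := (1 / 2 : ℂ) • !![Complex.I, 0; 0, -Complex.I]

/-- The Lie bracket `[X, Y] = XY - YX`. -/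
def br (X Y : M2) : M2 := X * Y - Y * X

/-- Partial derivative in the `x`-direction. -/
def pdx (g : ℝ × ℝ → M2) (p : ℝ × ℝ) : M2 := fderiv ℝ g p (1, 0)

/-- Partial derivative in the `y`-direction. -/
def pdy (g : ℝ × ℝ → M2) (p : ℝ × ℝ) : M2 := fderiv ℝ g p (0, 1)

instance instNACG_MM : NormedAddCommGroup (M2 →L[ℝ] M2) := ContinuousLinearMap.toNormedAddCommGroup

instance instNS_MM : NormedSpace ℝ (M2 →L[ℝ] M2) := ContinuousLinearMap.toNormedSpace

-- multiplication as continuous bilinear map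
def mulCLM : M2 →L[ℝ] M2 →L[ℝ] M2 :=
  LinearMap.toContinuousLinearMap
  { toFun := fun a => LinearMap.toContinuousLinearMap (LinearMap.mulLeft ℝ a)
    map_add' := by intro a b; ext x; simp [add_mul]
    map_smul' := by intro r a; ext x; simp [smul_mul_assoc] }

@[simp] lemma mulCLM_apply (a b : M2) : mulCLM a b = a * b := rfl

lemma contDiff_mul2 {f g : ℝ × ℝ → M2} (hf : ContDiff ℝ (⊤ : ℕ∞) f) (hg : ContDiff ℝ (⊤ : ℕ∞) g) :
    ContDiff ℝ (⊤ : ℕ∞) (fun q => f q * g q) :=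
  by have h := (mulCLM.contDiff.comp hf).clm_apply hg; exact h

lemma pd_mul {f g : ℝ × ℝ → M2} (hf : ContDiff ℝ (⊤ : ℕ∞) f) (hg : ContDiff ℝ (⊤ : ℕ∞) g)
    (p v : ℝ × ℝ) :
    fderiv ℝ (fun q => f q * g q) p v
      = f p * fderiv ℝ g p v + fderiv ℝ f p v * g p := by
  have H := (mulCLM.hasFDerivAt.comp p (hf.differentiable (by simp) p).hasFDerivAt).clm_apply
    (hg.differentiable (by simp) p).hasFDerivAt
  exact congrArg (fun L => L v) H.fderiv

lemma pd_clm (T : M2 →L[ℝ] M2) {f : ℝ × ℝ → M2} (hf : ContDiff ℝ (⊤ : ℕ∞) f) (p v : ℝ × ℝ) :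
    fderiv ℝ (fun q => T (f q)) p v = T (fderiv ℝ f p v) := by
  rw [show (fun q => T (f q)) = T ∘ f from rfl]
  erw [fderiv_comp p T.differentiableAt (hf.differentiable (by simp) p), T.fderiv]
  rfl

def pik : M2 →L[ℝ] M2 :=
  LinearMap.toContinuousLinearMap
  { toFun := fun X => (2 * (X 0 0).im) • e3
    map_add' := by intro X Y; simp [Matrix.add_apply, mul_add, add_smul]
    map_smul' := by
      intro r X
      simp only [Matrix.smul_apply, Complex.smul_im, RingHom.id_apply, smul_smul,
        smul_eq_mul]
      congr 1; ring }

def pip : M2 →L[ℝ] M2 :=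
  LinearMap.toContinuousLinearMap
  { toFun := fun X => (2 * (X 1 0).im) • e1 + (2 * (X 1 0).re) • e2
    map_add' := by intro X Y; simp [Matrix.add_apply, mul_add, add_smul]; abel
    map_smul' := by
      intro r X
      simp only [Matrix.smul_apply, Complex.smul_im, Complex.smul_re, RingHom.id_apply,
        smul_add, smul_smul, smul_eq_mul]
      congr 1 <;> congr 1 <;> ring }

@[simp] lemma pik_e1 : pik e1 = 0 := by
  simp [pik, e1, LinearMap.toContinuousLinearMap]
@[simp] lemma pik_e2 : pik e2 = 0 := by
  simp [pik, e2, LinearMap.toContinuousLinearMap]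
@[simp] lemma pik_e3 : pik e3 = e3 := by
  simp [pik, e3, LinearMap.toContinuousLinearMap]
@[simp] lemma pip_e1 : pip e1 = e1 := by
  simp [pip, e1, LinearMap.toContinuousLinearMap]
@[simp] lemma pip_e2 : pip e2 = e2 := by
  simp [pip, e2, LinearMap.toContinuousLinearMap]
@[simp] lemma pip_e3 : pip e3 = 0 := by
  simp [pip, e3, LinearMap.toContinuousLinearMap]

def adjCLM : M2 →L[ℝ] M2 :=
  LinearMap.toContinuousLinearMap
  { toFun := fun A => A.adjugate
    map_add' := by
      intro A B
      show (A + B).adjugate = A.adjugate + B.adjugate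
      rw [Matrix.adjugate_fin_two, Matrix.adjugate_fin_two, Matrix.adjugate_fin_two]
      ext i j
      fin_cases i <;> fin_cases j <;> simp [Matrix.add_apply] <;> ring
    map_smul' := by
      intro r A
      show (r • A).adjugate = r • A.adjugate
      rw [Matrix.adjugate_fin_two, Matrix.adjugate_fin_two]
      ext i j
      fin_cases i <;> fin_cases j <;> simp [Matrix.smul_apply] }

@[simp] lemma adjCLM_apply (A : M2) : adjCLM A = A.adjugate := rfl

lemma conj_eq_zero {F G : M2} (hFG : F * G = 1) (hGF : G * F = 1) (Y : M2) :
    F * Y * G = 0 ↔ Y = 0 := by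
  constructor
  · intro h
    have h2 := congrArg (fun Z => G * Z * F) h
    simp only [mul_zero, zero_mul] at h2
    calc Y = (G * F) * Y * (G * F) := by rw [hGF]; simp
    _ = G * (F * Y * G) * F := by noncomm_ring
    _ = 0 := h2
  · intro h; simp [h]

lemma he3 : e3 = !![Complex.I/2, 0; 0, -(Complex.I/2)] := by
  ext i j; fin_cases i <;> fin_cases j <;> simp [e3] <;> ring

lemma hcombo (c a b : ℝ) : (c•e3 + (a•e1 + b•e2) : M2)
    = !![(c/2)*Complex.I, (a/2)*Complex.I - b/2;
         (a/2)*Complex.I + b/2, -((c/2)*Complex.I)] := by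
  ext i j
  fin_cases i <;> fin_cases j <;>
    simp [e1, e2, e3, Matrix.smul_apply, Matrix.add_apply, Complex.ext_iff,
      Complex.smul_re, Complex.smul_im] <;> (try ring) <;> simp

lemma hcp (a b : ℝ) : (a•e1 + b•e2 : M2)
    = !![0, (a/2)*Complex.I - b/2; (a/2)*Complex.I + b/2, 0] := by
  have := hcombo 0 a b
  simpa using this

lemma hck (c : ℝ) : (c•e3 : M2) = !![(c/2)*Complex.I, 0; 0, -((c/2)*Complex.I)] := by
  have := hcombo c 0 0
  simpa using this

set_option maxHeartbeats 2000000 in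
lemma key_alg (a b c d f k m g h : ℝ) :
    br e3 ((a•e3 + (d•e1 + f•e2)) * br (k•e3 + (b•e1 + c•e2)) e3
      - br (k•e3 + (b•e1 + c•e2)) e3 * (a•e3 + (d•e1 + f•e2))
      + br (m•e3 + (g•e1 + h•e2)) e3)
    = (g•e1 + h•e2) + br (a•e3) (b•e1 + c•e2) := by
  simp only [br]
  rw [hcombo a d f, hcombo k b c, hcombo m g h, hcp g h, hck a, hcp b c, he3]
  ext i j
  fin_cases i <;> fin_cases j <;>
    simp [Matrix.mul_apply, Fin.sum_univ_two, Matrix.add_apply, Matrix.sub_apply,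
      Complex.ext_iff] <;> (try ring) <;> trivial

set_option maxHeartbeats 1000000 in
/-- with the same setup as Statement 1, `[N, ∂ₓ∂_y N]` vanishes at `p`
iff `∂ₓV_𝔭 + [U_𝔨, V_𝔭]` vanishes at `p`; in particular `N` is Lorentz harmonic iff
`∂ₓV_𝔭 + [U_𝔨, V_𝔭] ≡ 0`. -/
theorem statement2 (F : ℝ × ℝ → M2) (hF : ContDiff ℝ (⊤ : ℕ∞) F)
    (hFU : ∀ p, F p ∈ Matrix.specialUnitaryGroup (Fin 2) ℂ)
    (Uk Up Vk Vp : ℝ × ℝ → M2)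
    (hUk : ∀ p, Uk p ∈ Submodule.span ℝ ({e3} : Set M2))
    (hVk : ∀ p, Vk p ∈ Submodule.span ℝ ({e3} : Set M2))
    (hUp : ∀ p, Up p ∈ Submodule.span ℝ ({e1, e2} : Set M2))
    (hVp : ∀ p, Vp p ∈ Submodule.span ℝ ({e1, e2} : Set M2))
    (hx : ∀ p, (F p)⁻¹ * pdx F p = Uk p + Up p)
    (hy : ∀ p, (F p)⁻¹ * pdy F p = Vk p + Vp p)
    (N : ℝ × ℝ → M2) (hN : N = fun p => F p * e3 * (F p)⁻¹) :
    (∀ p, (br (N p) (pdx (pdy N) p) = 0 ↔ pdx Vp p + br (Uk p) (Vp p) = 0)) ∧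
    ((∀ p, br (N p) (pdx (pdy N) p) = 0) ↔ (∀ p, pdx Vp p + br (Uk p) (Vp p) = 0)) := by
  have key : ∀ p, (br (N p) (pdx (pdy N) p) = 0 ↔ pdx Vp p + br (Uk p) (Vp p) = 0) := by
    -- basic facts about F and its inverse
    have hdet : ∀ q, (F q).det = 1 := fun q =>
      ((Matrix.mem_specialUnitaryGroup_iff).1 (hFU q)).2
    set G : ℝ × ℝ → M2 := fun q => (F q)⁻¹ with hGdef
    have hinv : ∀ q, G q = adjCLM (F q) := by
      intro q
      show (F q)⁻¹ = adjCLM (F q)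
      rw [Matrix.inv_def, hdet, Ring.inverse_one, one_smul]; rfl
    have hGc : ContDiff ℝ (⊤ : ℕ∞) G := by
      rw [show G = fun q => adjCLM (F q) from funext hinv]
      exact adjCLM.contDiff.comp hF
    have hFG : ∀ q, F q * G q = 1 := fun q =>
      Matrix.mul_nonsing_inv _ (by rw [hdet]; exact isUnit_one)
    have hGF : ∀ q, G q * F q = 1 := fun q =>
      Matrix.nonsing_inv_mul _ (by rw [hdet]; exact isUnit_one)
    -- smoothness of the partial derivatives of F
    have hFd := hF.fderiv_right (m := (⊤ : ℕ∞)) (by simp)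
    have hpdxF : ContDiff ℝ (⊤ : ℕ∞) (pdx F) := hFd.clm_apply contDiff_const
    have hpdyF : ContDiff ℝ (⊤ : ℕ∞) (pdy F) := hFd.clm_apply contDiff_const
    -- the Maurer-Cartan form components
    set Bf : ℝ × ℝ → M2 := fun q => G q * pdy F q with hBdef
    have hBc : ContDiff ℝ (⊤ : ℕ∞) Bf := contDiff_mul2 hGc hpdyF
    have hBVkVp : ∀ q, Bf q = Vk q + Vp q := fun q => hy q
    have hVk_eq : Vk = fun q => pik (Bf q) := by
      funext q
      obtain ⟨kq, hkq⟩ := Submodule.mem_span_singleton.1 (hVk q)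
      obtain ⟨bq, cq, hbc⟩ := Submodule.mem_span_pair.1 (hVp q)
      rw [hBVkVp q, ← hkq, ← hbc]
      simp [map_add, _root_.map_smul]
    have hVp_eq : Vp = fun q => pip (Bf q) := by
      funext q
      obtain ⟨kq, hkq⟩ := Submodule.mem_span_singleton.1 (hVk q)
      obtain ⟨bq, cq, hbc⟩ := Submodule.mem_span_pair.1 (hVp q)
      rw [hBVkVp q, ← hkq, ← hbc]
      simp [map_add, _root_.map_smul]
    have hVkc : ContDiff ℝ (⊤ : ℕ∞) Vk := by rw [hVk_eq]; exact pik.contDiff.comp hBc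
    have hVpc : ContDiff ℝ (⊤ : ℕ∞) Vp := by rw [hVp_eq]; exact pip.contDiff.comp hBc
    -- N as a smooth function
    have hNs : N = fun q => (F q * e3) * G q := by rw [hN]
    have hFe3 : ContDiff ℝ (⊤ : ℕ∞) (fun q => F q * e3) := contDiff_mul2 hF contDiff_const
    have hNc : ContDiff ℝ (⊤ : ℕ∞) N := by rw [hNs]; exact contDiff_mul2 hFe3 hGc
    -- derivative of G
    have hpdG : ∀ q (v : ℝ × ℝ), fderiv ℝ G q v = -(G q * fderiv ℝ F q v * G q) := by
      intro q v
      have h1 : (fun q => G q * F q) = fun _ => (1 : M2) := funext hGF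
      have h0 : fderiv ℝ (fun q => G q * F q) q v = 0 := by
        rw [h1]; simp
      rw [pd_mul hGc hF q v] at h0
      have h2 : G q * fderiv ℝ F q v = -(fderiv ℝ G q v * F q) := by
        linear_combination (norm := noncomm_ring) h0
      calc fderiv ℝ G q v = fderiv ℝ G q v * (F q * G q) := by rw [hFG]; simp
        _ = (fderiv ℝ G q v * F q) * G q := by noncomm_ring
        _ = -(G q * fderiv ℝ F q v * G q) := by
            rw [show fderiv ℝ G q v * F q = -(G q * fderiv ℝ F q v) from by
              linear_combination (norm := noncomm_ring) h2]
            noncomm_ring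
    -- first derivative of N in the y-direction
    have hNy : pdy N = fun q => F q * (Bf q * e3 - e3 * Bf q) * G q := by
      funext q
      have hFy : pdy F q = F q * Bf q := by
        show pdy F q = F q * (G q * pdy F q)
        rw [← mul_assoc, hFG, one_mul]
      have h1 : pdy N q = (F q * e3) * fderiv ℝ G q (0,1)
          + fderiv ℝ (fun q => F q * e3) q (0,1) * G q := by
        rw [hNs]; exact pd_mul hFe3 hGc q (0,1)
      have h2 : fderiv ℝ (fun q => F q * e3) q (0,1) = pdy F q * e3 := by
        rw [pd_mul hF contDiff_const q (0,1)]
        simp [pdy]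
      rw [h1, h2, hpdG q (0,1)]
      show (F q * e3) * -(G q * pdy F q * G q) + pdy F q * e3 * G q = _
      rw [show G q * pdy F q = Bf q from rfl, hFy]
      noncomm_ring
  -- second derivative and conclusion, at a point p
    intro p
    obtain ⟨a, ha⟩ := Submodule.mem_span_singleton.1 (hUk p)
    obtain ⟨d, f, hdf⟩ := Submodule.mem_span_pair.1 (hUp p)
    obtain ⟨k, hk⟩ := Submodule.mem_span_singleton.1 (hVk p)
    obtain ⟨b, c, hbc⟩ := Submodule.mem_span_pair.1 (hVp p)
    -- derivative of Bf decomposes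
    have hVkVp_d : pdx Bf p = pdx Vk p + pdx Vp p := by
      have : Bf = fun q => Vk q + Vp q := funext hBVkVp
      rw [this]
      show fderiv ℝ (fun q => Vk q + Vp q) p (1,0) = _
      erw [fderiv_fun_add ((hVkc.differentiable (by simp)) p) ((hVpc.differentiable (by simp)) p)]
      rfl
    have hVkd : pdx Vk p = pik (pdx Bf p) := by
      rw [hVk_eq]; exact pd_clm pik hBc p (1,0)
    have hVpd : pdx Vp p = pip (pdx Bf p) := by
      rw [hVp_eq]; exact pd_clm pip hBc p (1,0)
    obtain ⟨m, hm⟩ : ∃ m : ℝ, pdx Vk p = m • e3 := ⟨_, by rw [hVkd]; rfl⟩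
    obtain ⟨g, h, hgh⟩ : ∃ g h : ℝ, pdx Vp p = g • e1 + h • e2 := ⟨_, _, by rw [hVpd]; rfl⟩
    have hBx : pdx Bf p = m • e3 + (g • e1 + h • e2) := by rw [hVkVp_d, hm, hgh]
    -- compute pdx (pdy N) p
    have hbrBc : ContDiff ℝ (⊤ : ℕ∞) (fun q => Bf q * e3 - e3 * Bf q) :=
      (contDiff_mul2 hBc contDiff_const).sub (contDiff_mul2 contDiff_const hBc)
    have hFbrBc : ContDiff ℝ (⊤ : ℕ∞) (fun q => F q * (Bf q * e3 - e3 * Bf q)) :=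
      contDiff_mul2 hF hbrBc
    have hbrBd : fderiv ℝ (fun q => Bf q * e3 - e3 * Bf q) p (1,0)
        = pdx Bf p * e3 - e3 * pdx Bf p := by
      erw [fderiv_fun_sub ((contDiff_mul2 hBc contDiff_const).differentiable (by simp) p)
        ((contDiff_mul2 contDiff_const hBc).differentiable (by simp) p)]
      show fderiv ℝ (fun q => Bf q * e3) p (1,0)
        - fderiv ℝ (fun q => e3 * Bf q) p (1,0) = _
      rw [pd_mul hBc contDiff_const p (1,0), pd_mul contDiff_const hBc p (1,0)]
      simp [pdx]
    have hFx : pdx F p = F p * (Uk p + Up p) := by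
      rw [← hx p, ← mul_assoc, hFG, one_mul]
    have hGx : pdx G p = -((Uk p + Up p) * G p) := by
      show fderiv ℝ G p (1,0) = _
      rw [hpdG p (1,0), show fderiv ℝ F p (1,0) = pdx F p from rfl, hFx,
        ← mul_assoc, hGF, one_mul]
    have hNxy : pdx (pdy N) p = F p *
        ((Uk p + Up p) * (Bf p * e3 - e3 * Bf p)
          - (Bf p * e3 - e3 * Bf p) * (Uk p + Up p)
          + (pdx Bf p * e3 - e3 * pdx Bf p)) * G p := by
      have h1 : pdx (pdy N) p
          = fderiv ℝ (fun q => (F q * (Bf q * e3 - e3 * Bf q)) * G q) p (1,0) := by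
        rw [hNy]; rfl
      rw [h1, pd_mul hFbrBc hGc p (1,0), pd_mul hF hbrBc p (1,0), hbrBd]
      rw [show fderiv ℝ G p (1,0) = pdx G p from rfl, hGx,
        show fderiv ℝ F p (1,0) = pdx F p from rfl, hFx]
      noncomm_ring
    -- conjugation identities
    have hconjmul : ∀ Y Z : M2, (F p * Y * G p) * (F p * Z * G p)
        = F p * (Y * Z) * G p := by
      intro Y Z
      calc (F p * Y * G p) * (F p * Z * G p)
          = F p * Y * ((G p * F p) * (Z * G p)) := by noncomm_ring
        _ = F p * (Y * Z) * G p := by rw [hGF]; noncomm_ring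
    have hbrN : br (N p) (pdx (pdy N) p)
        = F p * (pdx Vp p + br (Uk p) (Vp p)) * G p := by
      have hNp : N p = F p * e3 * G p := by rw [hNs]
      have hsub : ∀ Y Z : M2, F p * Y * G p - F p * Z * G p
          = F p * (Y - Z) * G p := fun Y Z => by noncomm_ring
      have halg := key_alg a b c d f k m g h
      simp only [br] at halg ⊢
      rw [hNp, hNxy, hconjmul, hconjmul, hsub, hBx, hBVkVp p,
        ← ha, ← hdf, ← hk, ← hbc, hgh, halg]
    rw [hbrN]
    exact conj_eq_zero (hFG p) (hGF p) _
  exact ⟨key, forall_congr' key⟩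
end
end

section
/- Let F : ℝ² → SU(2) be smooth with F⁻¹∂_x F = U_𝔨 + U_𝔭 and F⁻¹∂_y F = V_𝔨 + V_𝔭 (𝔨- and 𝔭-components), let f : ℝ² → su(2) be a C¹ map with ∂_x f = F U_𝔭 F⁻¹ and ∂_y f = −F V_𝔭 F⁻¹, and set N := F e₃ F⁻¹. Then for each point p, the pair of vectors (∂_x f(p), ∂_x N(p)) and (∂_y f(p), ∂_y N(p)) in su(2) × su(2) is linearly independent over ℝ if and only if U_𝔭(p) ≠ 0 and V_𝔭(p) ≠ 0. Equivalently, the Legendrian lift L = (f, N) : ℝ² → su(2) × su(2) has differential of rank 2 at p (f is a wave front at p) if and only if the connection is weakly regular at p. -/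
open Matrix

attribute [local instance] Matrix.normedAddCommGroup Matrix.normedSpace

noncomputable section

/- ======================= auxiliary material ======================= -/

/-- Multiplication of matrices as a continuous bilinear map. -/
def mulL : M2 →L[ℝ] M2 →L[ℝ] M2 :=
  LinearMap.toContinuousLinearMap <|
    { toFun := fun A => LinearMap.toContinuousLinearMap (LinearMap.mul ℝ M2 A),
      map_add' := fun A B => by ext x; simp [add_mul],
      map_smul' := fun r A => by ext x; simp [smul_mul_assoc] }

@[simp] lemma mulL_apply (A B : M2) : mulL A B = A * B := rfl

lemma hasFDerivAt_mul2 {u v : ℝ × ℝ → M2} {u' v' : (ℝ × ℝ) →L[ℝ] M2} {p : ℝ × ℝ}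
    (hu : HasFDerivAt u u' p) (hv : HasFDerivAt v v' p) :
    HasFDerivAt (fun q => u q * v q)
      (mulL.precompR (ℝ × ℝ) (u p) v' + mulL.precompL (ℝ × ℝ) u' (v p)) p :=
  mulL.hasFDerivAt_of_bilinear hu hv

lemma differentiableAt_mul2 {u v : ℝ × ℝ → M2} {p : ℝ × ℝ}
    (hu : DifferentiableAt ℝ u p) (hv : DifferentiableAt ℝ v p) :
    DifferentiableAt ℝ (fun q => u q * v q) p :=
  (hasFDerivAt_mul2 hu.hasFDerivAt hv.hasFDerivAt).differentiableAt

lemma fderiv_mul_apply2 {u v : ℝ × ℝ → M2} {p : ℝ × ℝ}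
    (hu : DifferentiableAt ℝ u p) (hv : DifferentiableAt ℝ v p) (w : ℝ × ℝ) :
    fderiv ℝ (fun q => u q * v q) p w
      = u p * fderiv ℝ v p w + fderiv ℝ u p w * v p := by
  have h := (hasFDerivAt_mul2 hu.hasFDerivAt hv.hasFDerivAt).fderiv
  refine (congrArg (fun T => T w) h).trans ?_
  rfl

lemma star_rsmul (r : ℝ) (A : M2) : star (r • A) = r • star A := by
  ext i j; simp [Matrix.conjTranspose_apply]

/-- `star` (conjugate transpose) as a continuous `ℝ`-linear map on `M2`. -/
def starL2 : M2 →L[ℝ] M2 :=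
  LinearMap.toContinuousLinearMap
    { toFun := fun A => star A,
      map_add' := fun A B => star_add A B,
      map_smul' := fun r A => star_rsmul r A }

@[simp] lemma starL2_apply (A : M2) : starL2 A = star A := rfl

/-- Conjugation `X ↦ G X G⁻¹ = G X (star G)` as an `ℝ`-linear map. -/
def conjL (G : M2) : M2 →ₗ[ℝ] M2 where
  toFun X := G * X * star G
  map_add' X Y := by noncomm_ring
  map_smul' r X := by simp [smul_mul_assoc, mul_smul_comm]

@[simp] lemma conjL_apply (G X : M2) : conjL G X = G * X * star G := rfl

/-- Conjugation on pairs. -/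
def conj2L (G : M2) : (M2 × M2) →ₗ[ℝ] M2 × M2 := (conjL G).prodMap (conjL G)

@[simp] lemma conj2L_apply (G : M2) (v : M2 × M2) :
    conj2L G v = (G * v.1 * star G, G * v.2 * star G) := rfl

lemma conj2L_ker {G : M2} (h1 : star G * G = 1) :
    LinearMap.ker (conj2L G) = ⊥ := by
  rw [LinearMap.ker_eq_bot]
  have e : ∀ X : M2, star G * (G * X * star G) * G = X := by
    intro X
    calc star G * (G * X * star G) * G = (star G * G) * X * (star G * G) := by noncomm_ring
      _ = X := by rw [h1]; simp
  intro v w h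
  have h1' := congrArg (fun Z => star G * Z * G) (congrArg Prod.fst h)
  have h2' := congrArg (fun Z => star G * Z * G) (congrArg Prod.snd h)
  simp only [conj2L_apply] at h1' h2'
  rw [e, e] at h1' h2'
  exact Prod.ext h1' h2'

lemma conj_deriv_aux (G K S : M2) :
    (G * e3) * (-S * K) + (G * S * e3 + G * 0) * K = G * (S * e3 - e3 * S) * K := by
  noncomm_ring

lemma star_e1 : star e1 = -e1 := by
  ext i j
  fin_cases i <;> fin_cases j <;>
    simp [e1, Matrix.conjTranspose_apply, Complex.ext_iff]

lemma star_e2 : star e2 = -e2 := by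
  ext i j
  fin_cases i <;> fin_cases j <;>
    simp [e2, Matrix.conjTranspose_apply, Complex.ext_iff]

lemma star_e3 : star e3 = -e3 := by
  ext i j
  fin_cases i <;> fin_cases j <;>
    simp [e3, Matrix.conjTranspose_apply, Complex.ext_iff]

lemma br13 : e1 * e3 = e3 * e1 - e2 := by
  ext i j
  fin_cases i <;> fin_cases j <;>
    simp [e1, e2, e3, Matrix.mul_apply, Fin.sum_univ_two, Complex.ext_iff] <;> ring_nf

lemma br23 : e2 * e3 = e3 * e2 + e1 := by
  ext i j
  fin_cases i <;> fin_cases j <;>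
    simp [e1, e2, e3, Matrix.mul_apply, Fin.sum_univ_two, Complex.ext_iff] <;> ring_nf

lemma indep12 {a b : ℝ} (h : a • e1 + b • e2 = 0) : a = 0 ∧ b = 0 := by
  have h10 := congrFun (congrFun h 1) 0
  simp [e1, e2, Matrix.add_apply, Complex.ext_iff] at h10
  exact ⟨h10.2, h10.1⟩

lemma key_bracket (s a b : ℝ) :
    (s • e3 + (a • e1 + b • e2)) * e3 - e3 * (s • e3 + (a • e1 + b • e2))
      = b • e1 + (-a) • e2 := by
  simp only [add_mul, mul_add, smul_mul_assoc, mul_smul_comm, br13, br23]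
  module

lemma range_pair {α : Type*} (x y : α) : Set.range ![x, y] = {x, y} := by
  ext z
  constructor
  · rintro ⟨i, rfl⟩
    fin_cases i <;> simp
  · rintro (rfl | rfl)
    · exact ⟨0, rfl⟩
    · exact ⟨1, rfl⟩

lemma core_indep (a b c d : ℝ) :
    LinearIndependent ℝ
      ![((a • e1 + b • e2, b • e1 + (-a) • e2) : M2 × M2),
        (-(c • e1 + d • e2), d • e1 + (-c) • e2)]
      ↔ (¬(a = 0 ∧ b = 0)) ∧ (¬(c = 0 ∧ d = 0)) := by
  rw [LinearIndependent.pair_iff]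
  constructor
  · intro h
    constructor
    · rintro ⟨rfl, rfl⟩
      have := (h 1 0 (by simp)).1
      exact one_ne_zero this
    · rintro ⟨rfl, rfl⟩
      have := (h 0 1 (by simp)).2
      exact one_ne_zero this
  · rintro ⟨hU, hV⟩ s t hst
    have h1 : (s * a - t * c) • e1 + (s * b - t * d) • e2 = 0 := by
      have h0 := congrArg Prod.fst hst
      simp only [Prod.smul_mk, Prod.mk_add_mk, Prod.fst] at h0
      calc (s * a - t * c) • e1 + (s * b - t * d) • e2
          = s • (a • e1 + b • e2) + t • (-(c • e1 + d • e2)) := by module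
        _ = 0 := h0
    have h2 : (s * b + t * d) • e1 + (-(s * a) - t * c) • e2 = 0 := by
      have h0 := congrArg Prod.snd hst
      simp only [Prod.smul_mk, Prod.mk_add_mk, Prod.snd] at h0
      calc (s * b + t * d) • e1 + (-(s * a) - t * c) • e2
          = s • (b • e1 + (-a) • e2) + t • (d • e1 + (-c) • e2) := by module
        _ = 0 := h0
    obtain ⟨e1a, e1b⟩ := indep12 h1
    obtain ⟨e2a, e2b⟩ := indep12 h2
    have hsa : s * a = 0 := by linarith
    have htc : t * c = 0 := by linarith
    have hsb : s * b = 0 := by linarith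
    have htd : t * d = 0 := by linarith
    constructor
    · by_contra hs
      exact hU ⟨(mul_eq_zero.mp hsa).resolve_left hs, (mul_eq_zero.mp hsb).resolve_left hs⟩
    · by_contra ht
      exact hV ⟨(mul_eq_zero.mp htc).resolve_left ht, (mul_eq_zero.mp htd).resolve_left ht⟩

/-- the Legendrian lift `L = (f, N)` is an immersion at `p`
(equivalently, the pairs `(f_x, N_x)` and `(f_y, N_y)` are linearly independent at `p`)
iff the connection is weakly regular at `p`, i.e. `U_𝔭(p) ≠ 0` and `V_𝔭(p) ≠ 0`. -/
theorem statement7 (F : ℝ × ℝ → M2) (hF : ContDiff ℝ (⊤ : ℕ∞) F)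
    (hFU : ∀ p, F p ∈ Matrix.specialUnitaryGroup (Fin 2) ℂ)
    (Uk Vk Up Vp : ℝ × ℝ → M2)
    (hUk : ∀ p, Uk p ∈ Submodule.span ℝ ({e3} : Set M2))
    (hVk : ∀ p, Vk p ∈ Submodule.span ℝ ({e3} : Set M2))
    (hUp : ∀ p, Up p ∈ Submodule.span ℝ ({e1, e2} : Set M2))
    (hVp : ∀ p, Vp p ∈ Submodule.span ℝ ({e1, e2} : Set M2))
    (hx : ∀ p, (F p)⁻¹ * pdx F p = Uk p + Up p)
    (hy : ∀ p, (F p)⁻¹ * pdy F p = Vk p + Vp p)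
    (f : ℝ × ℝ → M2) (hfC1 : ContDiff ℝ 1 f)
    (hfx : ∀ p, pdx f p = F p * Up p * (F p)⁻¹)
    (hfy : ∀ p, pdy f p = -(F p * Vp p * (F p)⁻¹))
    (N : ℝ × ℝ → M2) (hN : N = fun p => F p * e3 * (F p)⁻¹)
    (L : ℝ × ℝ → M2 × M2) (hL : L = fun q => (f q, N q)) :
    ∀ p : ℝ × ℝ,
      (LinearIndependent ℝ ![((pdx f p, pdx N p) : M2 × M2), (pdy f p, pdy N p)]
        ↔ (Up p ≠ 0 ∧ Vp p ≠ 0)) ∧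
      (LinearMap.rank ((fderiv ℝ L p : (ℝ × ℝ) →ₗ[ℝ] M2 × M2)) = 2
        ↔ (Up p ≠ 0 ∧ Vp p ≠ 0)) := by
  intro p
  -- unitarity facts
  have hstar_left : ∀ q, star (F q) * F q = 1 := fun q =>
    Matrix.mem_unitaryGroup_iff'.mp (Matrix.mem_specialUnitaryGroup_iff.mp (hFU q)).1
  have hstar_right : ∀ q, F q * star (F q) = 1 := fun q =>
    Matrix.mem_unitaryGroup_iff.mp (Matrix.mem_specialUnitaryGroup_iff.mp (hFU q)).1
  have hinv : ∀ q, (F q)⁻¹ = star (F q) := fun q =>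
    Matrix.inv_eq_left_inv (hstar_left q)
  -- differentiability
  have hFd : ∀ q, DifferentiableAt ℝ F q := fun q =>
    (hF.differentiable (by simp)).differentiableAt
  have hstarFd : ∀ q, DifferentiableAt ℝ (fun r => star (F r)) q := fun q =>
    (starL2.hasFDerivAt.comp q (hFd q).hasFDerivAt).differentiableAt
  have hfd : ∀ q, DifferentiableAt ℝ f q := fun q =>
    (hfC1.differentiable (by simp)).differentiableAt
  have hNeq : N = fun q => (F q * e3) * star (F q) := by
    rw [hN]; funext q; rw [hinv q]
  have hNd : ∀ q, DifferentiableAt ℝ N q := by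
    rw [hNeq]
    exact fun q => differentiableAt_mul2
      (differentiableAt_mul2 (hFd q) (differentiableAt_const _)) (hstarFd q)
  -- derivative of star ∘ F
  have hfderiv_star : ∀ w : ℝ × ℝ,
      fderiv ℝ (fun r => star (F r)) p w = star (fderiv ℝ F p w) := by
    intro w
    have h : fderiv ℝ (fun r => star (F r)) p = starL2.comp (fderiv ℝ F p) :=
      (starL2.hasFDerivAt.comp p (hFd p).hasFDerivAt).fderiv
    rw [h]; simp
  -- derivative of N in a direction w
  have hpdN : ∀ w : ℝ × ℝ,
      fderiv ℝ N p w
        = (F p * e3) * star (fderiv ℝ F p w)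
          + (fderiv ℝ F p w * e3 + F p * 0) * star (F p) := by
    intro w
    rw [hNeq]
    rw [fderiv_mul_apply2 (differentiableAt_mul2 (hFd p) (differentiableAt_const _))
        (hstarFd p), hfderiv_star w]
    congr 1
    congr 1
    rw [fderiv_mul_apply2 (hFd p) (differentiableAt_const _), fderiv_fun_const]
    simp [add_comm]
  -- coefficients
  obtain ⟨su, hsu⟩ := Submodule.mem_span_singleton.mp (hUk p)
  obtain ⟨sv, hsv⟩ := Submodule.mem_span_singleton.mp (hVk p)
  obtain ⟨a, b, hab⟩ := Submodule.mem_span_pair.mp (hUp p)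
  obtain ⟨c, d, hcd⟩ := Submodule.mem_span_pair.mp (hVp p)
  -- derivative of F in terms of the connection
  have hXF : fderiv ℝ F p (1, 0) = F p * (Uk p + Up p) := by
    have h0 := hx p; rw [hinv p] at h0
    have : F p * (star (F p) * pdx F p) = F p * (Uk p + Up p) := by rw [h0]
    rw [← mul_assoc, hstar_right p, one_mul] at this
    exact this
  have hYF : fderiv ℝ F p (0, 1) = F p * (Vk p + Vp p) := by
    have h0 := hy p; rw [hinv p] at h0
    have : F p * (star (F p) * pdy F p) = F p * (Vk p + Vp p) := by rw [h0]
    rw [← mul_assoc, hstar_right p, one_mul] at this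
    exact this
  -- skew-hermitian property
  have hskewU : star (Uk p + Up p) = -(Uk p + Up p) := by
    rw [← hsu, ← hab, star_add, star_add, star_rsmul, star_rsmul, star_rsmul,
      star_e1, star_e2, star_e3]
    module
  have hskewV : star (Vk p + Vp p) = -(Vk p + Vp p) := by
    rw [← hsv, ← hcd, star_add, star_add, star_rsmul, star_rsmul, star_rsmul,
      star_e1, star_e2, star_e3]
    module
  -- the partial derivatives of N
  have hNx : pdx N p = F p * (b • e1 + (-a) • e2) * star (F p) := by
    have h := hpdN (1, 0)
    rw [hXF, StarMul.star_mul, hskewU] at h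
    rw [show pdx N p = fderiv ℝ N p (1, 0) from rfl, h, conj_deriv_aux, ← hsu, ← hab,
      key_bracket su a b]
  have hNy : pdy N p = F p * (d • e1 + (-c) • e2) * star (F p) := by
    have h := hpdN (0, 1)
    rw [hYF, StarMul.star_mul, hskewV] at h
    rw [show pdy N p = fderiv ℝ N p (0, 1) from rfl, h, conj_deriv_aux, ← hsv, ← hcd,
      key_bracket sv c d]
  -- the vectors as conjugates
  have hv1 : ((pdx f p, pdx N p) : M2 × M2)
      = conj2L (F p) (a • e1 + b • e2, b • e1 + (-a) • e2) := by
    rw [conj2L_apply, hfx p, hinv p, ← hab, hNx]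
  have hv2 : ((pdy f p, pdy N p) : M2 × M2)
      = conj2L (F p) (-(c • e1 + d • e2), d • e1 + (-c) • e2) := by
    rw [conj2L_apply, hfy p, hinv p, ← hcd, hNy]
    have : F p * -(c • e1 + d • e2) * star (F p) = -(F p * (c • e1 + d • e2) * star (F p)) := by
      noncomm_ring
    rw [this]
  -- first equivalence
  have hUp0 : Up p ≠ 0 ↔ ¬(a = 0 ∧ b = 0) := by
    constructor
    · intro h h0
      apply h; rw [← hab]; rcases h0 with ⟨rfl, rfl⟩; simp
    · intro h h0
      exact h (indep12 (by rw [hab]; exact h0))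
  have hVp0 : Vp p ≠ 0 ↔ ¬(c = 0 ∧ d = 0) := by
    constructor
    · intro h h0
      apply h; rw [← hcd]; rcases h0 with ⟨rfl, rfl⟩; simp
    · intro h h0
      exact h (indep12 (by rw [hcd]; exact h0))
  have hcomp : ![conj2L (F p) (a • e1 + b • e2, b • e1 + (-a) • e2),
        conj2L (F p) (-(c • e1 + d • e2), d • e1 + (-c) • e2)]
      = conj2L (F p) ∘ ![(a • e1 + b • e2, b • e1 + (-a) • e2),
          (-(c • e1 + d • e2), d • e1 + (-c) • e2)] := by
    funext i; fin_cases i <;> rfl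
  have hmain1 : LinearIndependent ℝ
      ![((pdx f p, pdx N p) : M2 × M2), (pdy f p, pdy N p)] ↔ (Up p ≠ 0 ∧ Vp p ≠ 0) := by
    rw [hv1, hv2, hcomp,
      LinearMap.linearIndependent_iff _ (conj2L_ker (hstar_left p)),
      core_indep a b c d, ← hUp0, ← hVp0]
  refine ⟨hmain1, ?_⟩
  -- rank part
  have hdL : HasFDerivAt L ((fderiv ℝ f p).prod (fderiv ℝ N p)) p := by
    rw [hL]; exact (hfd p).hasFDerivAt.prodMk (hNd p).hasFDerivAt
  have hfderivL : fderiv ℝ L p = (fderiv ℝ f p).prod (fderiv ℝ N p) := hdL.fderiv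
  have hTl10 : fderiv ℝ L p (1, 0) = ((pdx f p, pdx N p) : M2 × M2) := by
    rw [hfderivL]; rfl
  have hTl01 : fderiv ℝ L p (0, 1) = ((pdy f p, pdy N p) : M2 × M2) := by
    rw [hfderivL]; rfl
  have htop : (⊤ : Submodule ℝ (ℝ × ℝ))
      = Submodule.span ℝ {((1 : ℝ), (0 : ℝ)), ((0 : ℝ), (1 : ℝ))} := by
    symm; rw [eq_top_iff]
    rintro ⟨x, y⟩ -
    exact Submodule.mem_span_pair.mpr ⟨x, y, by simp [Prod.ext_iff]⟩
  have hrange : LinearMap.range ((fderiv ℝ L p : (ℝ × ℝ) →ₗ[ℝ] M2 × M2))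
      = Submodule.span ℝ {((pdx f p, pdx N p) : M2 × M2), (pdy f p, pdy N p)} := by
    rw [← Submodule.map_top, htop, Submodule.map_span]
    congr 1
    rw [Set.image_insert_eq, Set.image_singleton]
    simp only [ContinuousLinearMap.coe_coe]
    rw [hTl10, hTl01]
  haveI : FiniteDimensional ℝ
      (Submodule.span ℝ ({((pdx f p, pdx N p) : M2 × M2), (pdy f p, pdy N p)} : Set (M2 × M2))) :=
    FiniteDimensional.span_of_finite ℝ (Set.toFinite _)
  have hrk : LinearMap.rank ((fderiv ℝ L p : (ℝ × ℝ) →ₗ[ℝ] M2 × M2))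
      = (Module.finrank ℝ
          (Submodule.span ℝ ({((pdx f p, pdx N p) : M2 × M2), (pdy f p, pdy N p)}
            : Set (M2 × M2))) : Cardinal) := by
    rw [LinearMap.rank, hrange, Module.finrank_eq_rank]
  rw [hrk, ← hmain1, linearIndependent_iff_card_eq_finrank_span]
  rw [show Set.range ![((pdx f p, pdx N p) : M2 × M2), (pdy f p, pdy N p)]
      = {((pdx f p, pdx N p) : M2 × M2), (pdy f p, pdy N p)} from range_pair _ _]
  rw [Set.finrank]
  simp only [Fintype.card_fin]
  constructor
  · intro h
    exact_mod_cast h.symm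
  · intro h
    exact_mod_cast h.symm
end
end
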